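/- Let (R, M) be a commutative local ring. Then every ideal of R is a direct sum of cyclic R-modules if and only if there exist an index set Λ and elements x, y and {w_λ}_{λ∈Λ} in R such that M = Rx ⊕ Ry ⊕ (⊕_{λ∈Λ} Rw_λ), where each Rw_λ is a simple R-module and both R/Ann(x) and R/Ann(y) are principal ideal rings. -/

import Mathlib

def Ideal.IsDirectSumOfCyclics {R : Type} [CommRing R] (I : Ideal R) : Prop :=
  ∃ (ι : Type) (x : ι → R),
    iSupIndep (fun i => Submodule.span R ({x i} : Set R)) ∧
      (⨆ i, Submodule.span R ({x i} : Set R)) = I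

/-!
Write `𝔪 = ⊕ R mᵢ`. Independence forces `mᵢ mⱼ = 0` for `i ≠ j`, hence `𝔪 mᵢ = R mᵢ²`: a summand
with `mᵢ² = 0` is simple, and `R ⧸ Ann(mᵢ)` has maximal ideal generated by the image of `mᵢ`. A
prime of that ring not containing this generator is killed by Nakayama's lemma, which holds for
direct sums of cyclics, so `R ⧸ Ann(mᵢ)` is a principal ideal ring by Kaplansky's criterion. There
are at most two summands with `mᵢ² ≠ 0`: for three of them `a, b, c` the ideal `R(a + b) + R(b + c)`
has no cyclic decomposition.

Conversely, let `𝔪 = Rx ⊕ Ry ⊕ S` with `𝔪 S = 0`. As `R ⧸ Ann(x)` and `R ⧸ Ann(y)` are local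
principal ideal rings, ideals below `Rx` or `Ry` are principal, and those below `Ry` form a chain.
For `I ≤ 𝔪` this makes the projection of `I` to `Rx ⊕ Ry` of the form `Rp' ⊕ Rq'`; lifting `p'`,
`q'` to `p, q ∈ I` gives `I = Rp ⊕ Rq ⊕ (I ∩ S)`, where `I ∩ S` is semisimple.
-/

open IsLocalRing

theorem iSupIndep_sumElim_iff {α ι κ : Type*} [CompleteLattice α] [IsModularLattice α]
    [IsCompactlyGenerated α] {f : ι → α} {g : κ → α} :
    iSupIndep (Sum.elim f g) ↔
      iSupIndep f ∧ iSupIndep g ∧ Disjoint (⨆ i, f i) (⨆ j, g j) := by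
  refine ⟨fun h => ⟨h.comp Sum.inl_injective, h.comp Sum.inr_injective, ?_⟩,
    fun ⟨hf, hg, hfg⟩ => ?_⟩
  · have := h.disjoint_biSup_biSup Set.isCompl_range_inl_range_inr.disjoint
    rwa [iSup_range, iSup_range] at this
  · rintro (i | j)
    · have hle : f i ⊔ ⨆ (i') (_ : i' ≠ i), f i' ≤ ⨆ i, f i :=
        sup_le (le_iSup f i) (iSup₂_le fun i' _ => le_iSup f i')
      simpa [iSup_sum, iSup_and] using
        (hf i).disjoint_sup_right_of_disjoint_sup_left (hfg.mono_left hle)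
    · have hle : g j ⊔ ⨆ (j') (_ : j' ≠ j), g j' ≤ ⨆ j, g j :=
        sup_le (le_iSup g j) (iSup₂_le fun j' _ => le_iSup g j')
      simpa [iSup_sum, sup_comm] using
        (hg j).disjoint_sup_right_of_disjoint_sup_left (hfg.symm.mono_left hle)

theorem Submodule.exists_span_singleton_eq_of_isAtom {R M : Type*} [Ring R] [AddCommGroup M]
    [Module R M] {N : Submodule R M} (hN : IsAtom N) : ∃ g, R ∙ g = N := by
  obtain ⟨g, hgN, hg0⟩ := Submodule.exists_mem_ne_zero_of_ne_bot hN.1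
  exact ⟨g, (hN.le_iff.1 ((span_singleton_le_iff_mem _ _).2 hgN)).resolve_left (by simpa using hg0)⟩

theorem Submodule.le_span_singleton_sup_inf {R M : Type*} [Ring R] [AddCommGroup M] [Module R M]
    {X Y N : Submodule R M} {x u : M} (hN : N ≤ X ⊔ Y) (hx : X ⊓ (N ⊔ Y) = R ∙ x)
    (hu : u ∈ N) (hxu : x - u ∈ Y) : N ≤ R ∙ u ⊔ N ⊓ Y := by
  intro g hg
  obtain ⟨ξ, hξ, ζ, hζ, rfl⟩ := mem_sup.1 (hN hg)
  have hξA : ξ ∈ X ⊓ (N ⊔ Y) := ⟨hξ, mem_sup.2 ⟨ξ + ζ, hg, -ζ, neg_mem hζ, by abel⟩⟩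
  obtain ⟨c, rfl⟩ := mem_span_singleton.1 (hx ▸ hξA)
  have hrest : c • x + ζ - c • u ∈ N ⊓ Y := by
    refine ⟨sub_mem hg (smul_mem _ _ hu), ?_⟩
    rw [show c • x + ζ - c • u = c • (x - u) + ζ by rw [smul_sub]; abel]
    exact add_mem (smul_mem _ _ hxu) hζ
  exact mem_sup.2 ⟨c • u, smul_mem _ _ (mem_span_singleton_self u), _, hrest, by abel⟩

theorem exists_ne_forall_eq_or_eq {α : Type*} {P : α → Prop} {a₀ b₀ : α} (h₀ : a₀ ≠ b₀)
    (hP : ∀ a b c, P a → P b → P c → a = b ∨ a = c ∨ b = c) :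
    ∃ a b, a ≠ b ∧ ∀ i, P i → i = a ∨ i = b := by
  by_cases h2 : ∃ a b, P a ∧ P b ∧ a ≠ b
  · obtain ⟨a, b, ha, hb, hab⟩ := h2
    refine ⟨a, b, hab, fun i hi => ?_⟩
    rcases hP a b i ha hb hi with h | h | h
    exacts [absurd h hab, Or.inl h.symm, Or.inr h.symm]
  push Not at h2
  by_cases h1 : ∃ a, P a
  · obtain ⟨a, ha⟩ := h1
    obtain ⟨b, hb⟩ : ∃ b, a ≠ b := by
      by_cases h : a = a₀
      exacts [⟨b₀, h ▸ h₀⟩, ⟨a₀, h⟩]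
    exact ⟨a, b, hb, fun i hi => Or.inl (h2 i a hi ha)⟩
  · push Not at h1
    exact ⟨a₀, b₀, h₀, fun i hi => absurd hi (h1 i)⟩

section CommRing

variable {R : Type*} [CommRing R]

theorem mul_eq_zero_of_disjoint_span_singleton {a b : R} (h : Disjoint (R ∙ a) (R ∙ b)) :
    a * b = 0 :=
  Submodule.disjoint_def.1 h _ (Submodule.mem_span_singleton.2 ⟨b, mul_comm b a⟩)
    (Submodule.mem_span_singleton.2 ⟨a, rfl⟩)

theorem iSupIndep.mul_eq_zero_of_linearCombination_eq_zero {ι : Type*} {z : ι → R}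
    (h : iSupIndep fun i => R ∙ z i) {f : ι →₀ R} (hf : Finsupp.linearCombination R z f = 0)
    (t : ι) : f t * z t = 0 := by
  by_cases ht : t ∈ f.support
  · exact (iSupIndep_iff_finsetSum_eq_zero_imp_eq_zero _).1 h f.support (fun i => f i • z i)
      (fun i _ => Submodule.smul_mem _ _ (Submodule.mem_span_singleton_self _)) hf t ht
  · rw [Finsupp.notMem_support_iff.1 ht, zero_mul]

theorem mem_iSup_span_singleton_iff {ι : Type*} {z : ι → R} {g : R} :
    g ∈ ⨆ i, R ∙ z i ↔ ∃ f : ι →₀ R, Finsupp.linearCombination R z f = g := by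
  rw [← Submodule.span_range_eq_iSup, ← Finsupp.range_linearCombination, LinearMap.mem_range]

theorem mul_mem_span_mul_self_of_iSupIndep {ι : Type*} {m : ι → R}
    (hind : iSupIndep fun i => R ∙ m i) (i : ι) {r : R} (hr : r ∈ ⨆ i, R ∙ m i) :
    r * m i ∈ R ∙ (m i * m i) := by
  rw [iSup_split_single _ i, Submodule.mem_sup] at hr
  obtain ⟨_, ha, d, hd, rfl⟩ := hr
  obtain ⟨c, rfl⟩ := Submodule.mem_span_singleton.1 ha
  have hdm : d * m i = 0 := Submodule.disjoint_def.1 (hind i) _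
    (Submodule.mem_span_singleton.2 ⟨d, rfl⟩) (Ideal.mul_mem_right _ _ hd)
  exact Submodule.mem_span_singleton.2 ⟨c, by rw [smul_eq_mul, smul_eq_mul, add_mul, hdm]; ring⟩

theorem Ideal.Quotient.mk_torsionOf_eq_mk_iff {x r s : R} :
    Ideal.Quotient.mk (Ideal.torsionOf R R x) r = Ideal.Quotient.mk _ s ↔ r * x = s * x := by
  rw [Ideal.Quotient.eq, Ideal.mem_torsionOf_iff, smul_eq_mul, sub_mul, sub_eq_zero]

theorem isPrincipal_of_le_span_singleton {x : R}
    [IsPrincipalIdealRing (R ⧸ Ideal.torsionOf R R x)] {K : Ideal R} (hK : K ≤ R ∙ x) :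
    K.IsPrincipal := by
  let mk := Ideal.Quotient.mk (Ideal.torsionOf R R x)
  let K' : Ideal R := Submodule.comap (LinearMap.toSpanSingleton R R x) K
  obtain ⟨_, hg⟩ := (IsPrincipalIdealRing.principal (K'.map mk)).principal
  obtain ⟨g, hgK', rfl⟩ := (Ideal.mem_map_iff_of_surjective _ Ideal.Quotient.mk_surjective).1
    (hg ▸ Submodule.mem_span_singleton_self _)
  refine ⟨g * x, le_antisymm (fun k hk => ?_) ((Submodule.span_singleton_le_iff_mem _ _).2 hgK')⟩
  obtain ⟨a, rfl⟩ := Submodule.mem_span_singleton.1 (hK hk)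
  have ha : mk a ∈ K'.map mk := Ideal.mem_map_of_mem _ (show a ∈ K' from hk)
  rw [hg] at ha
  obtain ⟨c, hc⟩ := Submodule.mem_span_singleton.1 ha
  obtain ⟨c, rfl⟩ := Ideal.Quotient.mk_surjective c
  rw [smul_eq_mul, ← map_mul, Ideal.Quotient.mk_torsionOf_eq_mk_iff] at hc
  exact Submodule.mem_span_singleton.2 ⟨c, by rw [smul_eq_mul, smul_eq_mul, ← hc, mul_assoc]⟩

instance PreValuationRing.of_isLocalRing_of_isBezout [IsLocalRing R] [IsBezout R] :
    PreValuationRing R := by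
  refine PreValuationRing.iff_dvd_total.2 ⟨fun a b => ?_⟩
  obtain ⟨g, hg⟩ := IsBezout.span_pair_isPrincipal a b
  obtain ⟨α, rfl⟩ := Ideal.mem_span_singleton'.1 (hg ▸ Ideal.subset_span (by simp) : a ∈ _)
  obtain ⟨β, rfl⟩ := Ideal.mem_span_singleton'.1 (hg ▸ Ideal.subset_span (by simp) : b ∈ _)
  obtain ⟨s, t, hst⟩ := Ideal.mem_span_pair.1 (hg ▸ Submodule.mem_span_singleton_self g)
  rcases isUnit_or_isUnit_one_sub_self (s * α + t * β) with h | h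
  · rcases isUnit_or_isUnit_of_isUnit_add h with h | h
    · exact Or.inl ((isUnit_of_mul_isUnit_right h).mul_left_dvd.2 (dvd_mul_left g β))
    · exact Or.inr ((isUnit_of_mul_isUnit_right h).mul_left_dvd.2 (dvd_mul_left g α))
  · have hg0 : g = 0 := h.mul_right_eq_zero.1 (by linear_combination -hst)
    simp [hg0]

end CommRing

section LocalRing

variable {R : Type*} [CommRing R] [IsLocalRing R]

theorem IsLocalRing.mem_maximalIdeal_of_mul_eq_zero {r s : R} (h : r * s = 0) (hs : s ≠ 0) :
    r ∈ maximalIdeal R :=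
  fun hr => hs (hr.mul_right_eq_zero.1 h)

theorem exists_mul_notMem_maximalIdeal {ι : Type*} {z ρ : ι → R} {u : ι →₀ R} {a d : R}
    (hz : ∀ t, a * z t = ρ t * d) (hd : a * Finsupp.linearCombination R z u = d) (hd0 : d ≠ 0) :
    ∃ t, u t * ρ t ∉ maximalIdeal R := by
  by_contra! h
  have hsum : a * Finsupp.linearCombination R z u = (u.sum fun t r => r * ρ t) * d := by
    rw [Finsupp.linearCombination_apply, Finsupp.mul_sum, Finsupp.sum_mul]
    exact Finsupp.sum_congr fun t _ => by rw [smul_eq_mul, mul_left_comm, hz, mul_assoc]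
  have h₁ : 1 - u.sum (fun t r => r * ρ t) ∈ maximalIdeal R :=
    mem_maximalIdeal_of_mul_eq_zero (by linear_combination hsum - hd) hd0
  have h₂ : u.sum (fun t r => r * ρ t) ∈ maximalIdeal R := Ideal.sum_mem _ fun t _ => h t
  exact (Ideal.ne_top_iff_one _).1 (maximalIdeal.isMaximal R).ne_top
    (sub_add_cancel (1 : R) _ ▸ add_mem h₁ h₂)

theorem isAtom_span_singleton_of_maximalIdeal_mul_eq_zero {g : R} (hg : g ≠ 0)
    (hmg : ∀ r ∈ maximalIdeal R, r * g = 0) :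
    IsAtom (R ∙ g) := by
  refine ⟨by simpa using hg, fun L hL => ?_⟩
  by_contra hL0
  obtain ⟨l, hlL, hl0⟩ := Submodule.exists_mem_ne_zero_of_ne_bot hL0
  obtain ⟨c, rfl⟩ := Submodule.mem_span_singleton.1 (hL.le hlL)
  have hc : IsUnit c := not_not.1 fun hc => hl0 (hmg c hc)
  exact hL.not_ge
    ((Submodule.span_singleton_le_iff_mem _ _).2 ((L.smul_mem_iff_of_isUnit hc).1 hlL))

theorem mul_eq_zero_of_isSimpleModule_span_singleton {w r : R} [IsSimpleModule R (R ∙ w)]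
    (hr : r ∈ maximalIdeal R) : r * w = 0 := by
  have hann : r ∈ Module.annihilator R (R ∙ w) :=
    (eq_maximalIdeal (IsSimpleModule.annihilator_isMaximal (R := R) (M := R ∙ w))).symm ▸ hr
  exact congrArg Subtype.val
    (Module.mem_annihilator.1 hann ⟨w, Submodule.mem_span_singleton_self w⟩)

theorem dvd_total_mul_of_isBezout {x : R} [IsBezout (R ⧸ Ideal.torsionOf R R x)] (a b : R) :
    a * x ∣ b * x ∨ b * x ∣ a * x := by
  rcases eq_or_ne x 0 with rfl | hx
  · simp
  have : Nontrivial (R ⧸ Ideal.torsionOf R R x) :=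
    Ideal.Quotient.nontrivial_iff.2 (by rwa [Ne, Ideal.torsionOf_eq_top_iff])
  have : IsLocalRing (R ⧸ Ideal.torsionOf R R x) :=
    .of_surjective' _ Ideal.Quotient.mk_surjective
  let mk := Ideal.Quotient.mk (Ideal.torsionOf R R x)
  have hdvd : ∀ a b : R, mk a ∣ mk b → a * x ∣ b * x := by
    rintro a b ⟨c, hc⟩
    obtain ⟨c, rfl⟩ := Ideal.Quotient.mk_surjective c
    rw [← map_mul, Ideal.Quotient.mk_torsionOf_eq_mk_iff] at hc
    exact ⟨c, by rw [hc]; ring⟩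
  exact (ValuationRing.dvd_total (mk a) (mk b)).imp (hdvd a b) (hdvd b a)

end LocalRing

namespace Ideal

variable {R : Type} [CommRing R]

theorem isDirectSumOfCyclics_span_singleton (g : R) : IsDirectSumOfCyclics (R ∙ g) :=
  ⟨Unit, fun _ => g, iSupIndep_subsingleton _, iSup_const⟩

theorem IsDirectSumOfCyclics.sup {I J : Ideal R} (hI : I.IsDirectSumOfCyclics)
    (hJ : J.IsDirectSumOfCyclics) (hIJ : Disjoint I J) : (I ⊔ J).IsDirectSumOfCyclics := by
  obtain ⟨ι, x, hx, rfl⟩ := hI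
  obtain ⟨κ, y, hy, rfl⟩ := hJ
  refine ⟨ι ⊕ κ, Sum.elim x y, ?_, iSup_sum⟩
  have : (fun k => R ∙ Sum.elim x y k) = Sum.elim (fun i => R ∙ x i) (fun j => R ∙ y j) := by
    ext (i | j) : 1 <;> rfl
  rw [this, iSupIndep_sumElim_iff]
  exact ⟨hx, hy, hIJ⟩

/-- Nakayama's lemma for direct sums of cyclic ideals, which need not be finitely generated. -/
theorem IsDirectSumOfCyclics.eq_bot_of_le_mul {I J : Ideal R} (hI : I.IsDirectSumOfCyclics)
    (hJ : J ≤ jacobson ⊥) (hIJ : I ≤ J * I) : I = ⊥ := by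
  obtain ⟨ι, z, hz, rfl⟩ := hI
  refine iSup_eq_bot.2 fun t => Submodule.eq_bot_of_le_smul_of_le_jacobson_bot J _
    (Submodule.fg_span_singleton _) ?_ hJ
  have hJt : J • (R ∙ z t) ≤ R ∙ z t := Submodule.smul_le_right
  have hmem : R ∙ z t ≤ J • (R ∙ z t) ⊔ ⨆ (s) (_ : s ≠ t), R ∙ z s :=
    calc R ∙ z t ≤ J * ⨆ s, R ∙ z s := (le_iSup (fun s => R ∙ z s) t).trans hIJ
      _ = ⨆ s, J • (R ∙ z s) := by rw [← Ideal.smul_eq_mul, Submodule.smul_iSup]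
      _ ≤ _ := by
        rw [iSup_split_single _ t]
        exact sup_le_sup_left (iSup₂_mono fun s _ => Submodule.smul_le_right) _
  calc R ∙ z t ≤ (J • (R ∙ z t) ⊔ ⨆ (s) (_ : s ≠ t), R ∙ z s) ⊓ R ∙ z t := le_inf hmem le_rfl
    _ = J • (R ∙ z t) := by rw [sup_inf_assoc_of_le _ hJt, inf_comm, (hz t).eq_bot, sup_bot_eq]

theorem isDirectSumOfCyclics_of_maximalIdeal_mul_eq_zero [IsLocalRing R] {N : Ideal R}
    (hN : ∀ r ∈ maximalIdeal R, ∀ g ∈ N, r * g = 0) : N.IsDirectSumOfCyclics := by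
  have hatoms : sSup {a ≤ N | IsAtom a} = N := by
    refine le_antisymm (sSup_le fun a ha => ha.1) fun g hg => ?_
    obtain rfl | hg0 := eq_or_ne g 0
    · exact zero_mem _
    have hmem : R ∙ g ∈ {a ≤ N | IsAtom a} := ⟨(Submodule.span_singleton_le_iff_mem _ _).2 hg,
      isAtom_span_singleton_of_maximalIdeal_mul_eq_zero hg0 fun r hr => hN r hr g hg⟩
    exact Submodule.mem_sSup_of_mem hmem (Submodule.mem_span_singleton_self g)
  obtain ⟨s, hs, hsN, hatom⟩ := exists_sSupIndep_of_sSup_atoms N hatoms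
  choose g hg using fun a : s => Submodule.exists_span_singleton_eq_of_isAtom (hatom a.2)
  refine ⟨s, g, ?_, ?_⟩
  · simpa only [hg] using (sSupIndep_iff s).1 hs
  · simpa only [hg, ← sSup_eq_iSup'] using hsN

end Ideal

section

variable {R : Type} [CommRing R] [IsLocalRing R]

theorem isPrincipalIdealRing_quotient_torsionOf (H : ∀ I : Ideal R, I.IsDirectSumOfCyclics)
    {x : R} (hxM : x ∈ maximalIdeal R) (hx : ∀ r ∈ maximalIdeal R, r * x ∈ R ∙ (x * x)) :
    IsPrincipalIdealRing (R ⧸ Ideal.torsionOf R R x) := by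
  let mk := Ideal.Quotient.mk (Ideal.torsionOf R R x)
  refine IsPrincipalIdealRing.of_prime fun P hP => ?_
  have hfactor : ∀ r, mk r ∈ P → ∃ c, mk r = mk c * mk x := by
    intro r hr
    have hrM : r ∈ maximalIdeal R := fun hu => hP.ne_top (P.eq_top_of_isUnit_mem hr (hu.map mk))
    obtain ⟨c, hc⟩ := Submodule.mem_span_singleton.1 (hx r hrM)
    exact ⟨c, by rw [← map_mul, Ideal.Quotient.mk_torsionOf_eq_mk_iff, ← hc, smul_eq_mul]; ring⟩
  by_cases hxP : mk x ∈ P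
  · refine ⟨mk x, le_antisymm (fun ρ hρ => ?_) ((Submodule.span_singleton_le_iff_mem _ _).2 hxP)⟩
    obtain ⟨r, rfl⟩ := Ideal.Quotient.mk_surjective ρ
    obtain ⟨c, hc⟩ := hfactor r hρ
    exact Submodule.mem_span_singleton.2 ⟨mk c, hc.symm⟩
  -- Otherwise `P = x̄ P`, so the ideal `P' = {r x | r̄ ∈ P}` of `R` satisfies `P' ≤ 𝔪 P'`.
  let P' : Ideal R := Submodule.map (LinearMap.toSpanSingleton R R x) (P.comap mk)
  have hP' : P' ≤ maximalIdeal R * P' := by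
    rintro _ ⟨r, hr, rfl⟩
    obtain ⟨c, hc⟩ := hfactor r hr
    have hcP : mk c ∈ P := (hP.mem_or_mem (hc ▸ hr)).resolve_right hxP
    rw [← map_mul, Ideal.Quotient.mk_torsionOf_eq_mk_iff] at hc
    rw [LinearMap.toSpanSingleton_apply, smul_eq_mul, hc, mul_comm c, mul_assoc]
    exact Ideal.mul_mem_mul hxM ⟨c, hcP, smul_eq_mul c x⟩
  have hP'bot := (H P').eq_bot_of_le_mul (jacobson_eq_maximalIdeal ⊥ bot_ne_top).ge hP'
  refine ⟨0, le_antisymm (fun ρ hρ => ?_) (by simp)⟩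
  obtain ⟨r, rfl⟩ := Ideal.Quotient.mk_surjective ρ
  have hrx : r * x = 0 := (Submodule.mem_bot R).1 (hP'bot ▸ ⟨r, hρ, rfl⟩ : r • x ∈ (⊥ : Ideal R))
  rw [Submodule.span_singleton_eq_bot.2 rfl, Submodule.mem_bot, ← map_zero mk,
    Ideal.Quotient.mk_torsionOf_eq_mk_iff, hrx, zero_mul]

theorem mul_self_eq_zero_of_isDirectSumOfCyclics {a b c : R}
    (hI : Ideal.IsDirectSumOfCyclics (R ∙ (a + b) ⊔ R ∙ (b + c)))
    (hab : a * b = 0) (hac : a * c = 0) (hbc : b * c = 0) :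
    a * a = 0 ∨ b * b = 0 ∨ c * c = 0 := by
  by_contra! ⟨ha, hb, hc⟩
  obtain ⟨ι, z, hind, hsup⟩ := hI
  have hzI : ∀ t, ∃ ρ σ : R, z t = ρ * (a + b) + σ * (b + c) := fun t => by
    obtain ⟨_, h₁, _, h₂, hz⟩ := Submodule.mem_sup.1
      (hsup ▸ Submodule.mem_iSup_of_mem t (Submodule.mem_span_singleton_self (z t)))
    obtain ⟨ρ, rfl⟩ := Submodule.mem_span_singleton.1 h₁
    obtain ⟨σ, rfl⟩ := Submodule.mem_span_singleton.1 h₂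
    exact ⟨ρ, σ, hz.symm⟩
  choose ρ σ hz using hzI
  have hza t : a * z t = ρ t * (a * a) := by
    rw [hz t]; linear_combination (ρ t + σ t) * hab + σ t * hac
  have hzb t : b * z t = (ρ t + σ t) * (b * b) := by
    rw [hz t]; linear_combination ρ t * hab + σ t * hbc
  have hzc t : c * z t = σ t * (c * c) := by
    rw [hz t]; linear_combination ρ t * hac + (ρ t + σ t) * hbc
  obtain ⟨u, hu⟩ := mem_iSup_span_singleton_iff.1
    (hsup.symm ▸ Submodule.mem_sup_left (Submodule.mem_span_singleton_self (a + b)))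
  obtain ⟨v, hv⟩ := mem_iSup_span_singleton_iff.1
    (hsup.symm ▸ Submodule.mem_sup_right (Submodule.mem_span_singleton_self (b + c)))
  -- Multiplying by `a`, `c`, `b` kills `b + c`, `a + b`, `(a + b) - (b + c)` respectively,
  -- hence also each of their components along the `z t`.
  have hcomp (e : R) (f : ι →₀ R) (hf : e * Finsupp.linearCombination R z f = 0) (t : ι) :
      f t * (e * z t) = 0 := by
    have := hind.mul_eq_zero_of_linearCombination_eq_zero (f := e • f)
      (by rw [map_smul, smul_eq_mul, hf]) t
    rwa [Finsupp.smul_apply, smul_eq_mul, mul_right_comm, mul_comm] at this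
  have hMprime := (maximalIdeal.isMaximal R).isPrime
  obtain ⟨t, ht⟩ := exists_mul_notMem_maximalIdeal hza (by rw [hu]; linear_combination hab) ha
  have hρ : ρ t ∉ maximalIdeal R := fun h => ht (Ideal.mul_mem_left _ _ h)
  have hut : u t ∉ maximalIdeal R := fun h => ht (Ideal.mul_mem_right _ _ h)
  have hvt : v t ∈ maximalIdeal R := by
    refine (hMprime.mem_or_mem (mem_maximalIdeal_of_mul_eq_zero (s := a * a) ?_ ha)).resolve_right
      hρ
    linear_combination hcomp a v (by rw [hv]; linear_combination hab + hac) t - v t * hza t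
  have hσ : σ t ∈ maximalIdeal R := by
    refine (hMprime.mem_or_mem (mem_maximalIdeal_of_mul_eq_zero (s := c * c) ?_ hc)).resolve_left
      hut
    linear_combination hcomp c u (by rw [hu]; linear_combination hac + hbc) t - u t * hzc t
  have hρσ : ρ t + σ t ∈ maximalIdeal R := by
    have huv : u t - v t ∉ maximalIdeal R := fun h => hut (by simpa using add_mem h hvt)
    refine (hMprime.mem_or_mem (mem_maximalIdeal_of_mul_eq_zero (s := b * b) ?_ hb)).resolve_left
      huv
    have := hcomp b (u - v) (by rw [map_sub, hu, hv]; linear_combination hab - hbc) t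
    rw [Finsupp.sub_apply] at this
    linear_combination this - (u t - v t) * hzb t
  exact hρ (by simpa using sub_mem hρσ hσ)

theorem exists_decomposition_of_iSupIndep {ι : Type} {m : ι → R}
    (hind : iSupIndep fun i => R ∙ m i) (hsup : ⨆ i, R ∙ m i = maximalIdeal R) {a b : ι}
    (hab : a ≠ b) (hsq : ∀ i, i ≠ a → i ≠ b → m i * m i = 0)
    (ha : IsPrincipalIdealRing (R ⧸ Ideal.torsionOf R R (m a)))
    (hb : IsPrincipalIdealRing (R ⧸ Ideal.torsionOf R R (m b))) :
    ∃ (Λ : Type) (x y : R) (w : Λ → R),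
      iSupIndep (Sum.elim ![R ∙ x, R ∙ y] fun l => R ∙ w l) ∧
      R ∙ x ⊔ R ∙ y ⊔ (⨆ l, R ∙ w l) = maximalIdeal R ∧
      (∀ l, IsSimpleModule R (R ∙ w l)) ∧
      IsPrincipalIdealRing (R ⧸ Ideal.torsionOf R R x) ∧
      IsPrincipalIdealRing (R ⧸ Ideal.torsionOf R R y) := by
  let Λ := {i // i ≠ a ∧ i ≠ b ∧ m i ≠ 0}
  let e : Fin 2 ⊕ Λ → ι := Sum.elim ![a, b] Subtype.val
  have he : Function.Injective e := by
    refine Function.Injective.sumElim ?_ Subtype.val_injective fun i l => ?_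
    · intro i j h
      fin_cases i <;> fin_cases j
      exacts [rfl, absurd h hab, absurd h.symm hab, rfl]
    · fin_cases i
      exacts [l.2.1.symm, l.2.2.1.symm]
  have hfam : Sum.elim ![R ∙ m a, R ∙ m b] (fun l : Λ => R ∙ m l) = (fun i => R ∙ m i) ∘ e := by
    ext (i | l) : 1
    · fin_cases i <;> rfl
    · rfl
  refine ⟨Λ, m a, m b, fun l => m l, hfam ▸ hind.comp he, ?_, fun l => ?_, ha, hb⟩
  · rw [← hsup]
    refine le_antisymm
      (sup_le (sup_le (le_iSup (fun i => R ∙ m i) a) (le_iSup (fun i => R ∙ m i) b))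
      (iSup_le fun l => le_iSup (fun i => R ∙ m i) l)) (iSup_le fun i => ?_)
    by_cases hia : i = a
    · rw [hia]
      exact le_sup_left.trans le_sup_left
    by_cases hib : i = b
    · rw [hib]
      exact le_sup_right.trans le_sup_left
    by_cases hi0 : m i = 0
    · simp [hi0]
    exact le_sup_of_le_right (le_iSup (fun l : Λ => R ∙ m l) ⟨i, hia, hib, hi0⟩)
  · refine isSimpleModule_iff_isAtom.2
      (isAtom_span_singleton_of_maximalIdeal_mul_eq_zero l.2.2.2 fun r hr => ?_)
    have := mul_mem_span_mul_self_of_iSupIndep hind l (hsup ▸ hr)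
    rwa [hsq l l.2.1 l.2.2.1, Submodule.span_singleton_eq_bot.2 rfl, Submodule.mem_bot] at this

theorem exists_decomposition_of_forall_isDirectSumOfCyclics
    (H : ∀ I : Ideal R, I.IsDirectSumOfCyclics) :
    ∃ (Λ : Type) (x y : R) (w : Λ → R),
      iSupIndep (Sum.elim ![R ∙ x, R ∙ y] fun l => R ∙ w l) ∧
      R ∙ x ⊔ R ∙ y ⊔ (⨆ l, R ∙ w l) = maximalIdeal R ∧
      (∀ l, IsSimpleModule R (R ∙ w l)) ∧
      IsPrincipalIdealRing (R ⧸ Ideal.torsionOf R R x) ∧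
      IsPrincipalIdealRing (R ⧸ Ideal.torsionOf R R y) := by
  obtain ⟨ι, m₀, hind₀, hsup₀⟩ := H (maximalIdeal R)
  -- Two zero summands are appended so that the decomposition has two distinguished indices.
  let m : ι ⊕ Fin 2 → R := Sum.elim m₀ 0
  have hspan : (fun i => R ∙ m i) = Sum.elim (fun i => R ∙ m₀ i) fun _ => ⊥ := by
    ext (i | j) : 1
    · rfl
    · simp [m]
  have hind : iSupIndep fun i => R ∙ m i := by
    rw [hspan, iSupIndep_sumElim_iff]
    exact ⟨hind₀, fun _ => disjoint_bot_left, by simp⟩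
  have hsup : ⨆ i, R ∙ m i = maximalIdeal R := by simp [hspan, iSup_sum, hsup₀]
  obtain ⟨a, b, hab, hsq⟩ := exists_ne_forall_eq_or_eq (P := fun i => m i * m i ≠ 0)
    (a₀ := .inr 0) (b₀ := .inr 1) (by simp) fun i j k hi hj hk => by
      by_contra! hne
      have hmul : ∀ {i j}, i ≠ j → m i * m j = 0 := fun h =>
        mul_eq_zero_of_disjoint_span_singleton (hind.pairwiseDisjoint h)
      rcases mul_self_eq_zero_of_isDirectSumOfCyclics (H _) (hmul hne.1) (hmul hne.2.1)
        (hmul hne.2.2) with h | h | h <;> contradiction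
  have hpir (i) : IsPrincipalIdealRing (R ⧸ Ideal.torsionOf R R (m i)) :=
    isPrincipalIdealRing_quotient_torsionOf H
      (hsup ▸ Submodule.mem_iSup_of_mem i (Submodule.mem_span_singleton_self _))
      fun r hr => mul_mem_span_mul_self_of_iSupIndep hind i (hsup ▸ hr)
  exact exists_decomposition_of_iSupIndep hind hsup hab
    (fun i hia hib => not_not.1 fun h => (hsq i h).elim hia hib) (hpir a) (hpir b)

theorem exists_disjoint_span_sup_span_eq {x y : R} (hxy : Disjoint (R ∙ x) (R ∙ y))
    (hX : ∀ K ≤ R ∙ x, K.IsPrincipal) (hY : ∀ K ≤ R ∙ y, K.IsPrincipal)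
    (hYdvd : ∀ a b : R, a * y ∣ b * y ∨ b * y ∣ a * y)
    (hMy : ∀ r ∈ maximalIdeal R, r * y ∈ R ∙ (y * y)) {N : Ideal R} (hN : N ≤ R ∙ x ⊔ R ∙ y) :
    ∃ p ∈ N, ∃ q ∈ N, Disjoint (R ∙ p) (R ∙ q) ∧ R ∙ p ⊔ R ∙ q = N := by
  obtain ⟨x', hx'⟩ := (hX _ (inf_le_left : R ∙ x ⊓ (N ⊔ R ∙ y) ≤ _)).principal
  have hx'A : x' ∈ R ∙ x ⊓ (N ⊔ R ∙ y) := hx' ▸ Submodule.mem_span_singleton_self x'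
  obtain ⟨u, hu, η, hη, rfl⟩ := Submodule.mem_sup.1 hx'A.2
  have hsplit := Submodule.le_span_singleton_sup_inf hN hx' hu (by simpa using hη)
  obtain ⟨y', hy'⟩ := (hY _ (inf_le_right : N ⊓ R ∙ y ≤ _)).principal
  have hy'N : y' ∈ N ⊓ R ∙ y := hy' ▸ Submodule.mem_span_singleton_self y'
  by_cases hηN : η ∈ N
  · have hu' : u ∈ R ∙ (u + η) ⊔ R ∙ y' := Submodule.mem_sup.2
      ⟨u + η, Submodule.mem_span_singleton_self _, -η, hy' ▸ neg_mem ⟨hηN, hη⟩, by abel⟩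
    refine ⟨u + η, add_mem hu hηN, y', hy'N.1,
      hxy.mono ((Submodule.span_singleton_le_iff_mem _ _).2 hx'A.1) (hy' ▸ inf_le_right),
      le_antisymm ?_ (hsplit.trans (sup_le ?_ (hy' ▸ le_sup_right)))⟩
    · exact sup_le ((Submodule.span_singleton_le_iff_mem _ _).2 (add_mem hu hηN))
        ((Submodule.span_singleton_le_iff_mem _ _).2 hy'N.1)
    · exact (Submodule.span_singleton_le_iff_mem _ _).2 hu'
  -- Otherwise `N ⊓ R ∙ y` is a proper submodule of `R ∙ η`, so it lies in
  -- `𝔪 η = R (y η) = R (y u)`.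
  refine ⟨u, hu, 0, zero_mem N, by simp, le_antisymm (by simpa using hu) ?_⟩
  refine hsplit.trans (sup_le le_sup_left (hy' ▸ ?_))
  refine le_sup_of_le_left ((Submodule.span_singleton_le_iff_mem _ _).2 ?_)
  obtain ⟨e, rfl⟩ := Submodule.mem_span_singleton.1 hη
  obtain ⟨d, hd⟩ := Submodule.mem_span_singleton.1 hy'N.2
  obtain ⟨s, hs⟩ := Submodule.mem_span_singleton.1 hx'A.1
  simp only [smul_eq_mul] at hd hs hηN ⊢
  rcases hYdvd d e with ⟨c, hc⟩ | ⟨c, hc⟩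
  · exact absurd (hc ▸ hd ▸ Ideal.mul_mem_right c _ hy'N.1 : e * y ∈ N) hηN
  have hcM : c ∈ maximalIdeal R := fun hcu => hηN <| (N.smul_mem_iff_of_isUnit hcu).1 <| by
    rw [show c • (e * y) = y' by rw [smul_eq_mul, ← hd, hc]; ring]
    exact hy'N.1
  obtain ⟨k, hk⟩ := Submodule.mem_span_singleton.1 (hMy c hcM)
  rw [smul_eq_mul] at hk
  exact Submodule.mem_span_singleton.2 ⟨-(k * y), by
    linear_combination
      (k * y) * hs + e * hk - hc + hd - k * s * mul_eq_zero_of_disjoint_span_singleton hxy⟩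

theorem exists_lift_of_mem_sup {S I : Ideal R} (hS : ∀ r ∈ maximalIdeal R, ∀ s ∈ S, r * s = 0)
    {p' : R} (hp' : p' ∈ I ⊔ S) : ∃ p ∈ I, p - p' ∈ S ∧ ∀ r, r * p' = 0 → r * p = 0 := by
  obtain rfl | hp'0 := eq_or_ne p' 0
  · exact ⟨0, zero_mem I, by simp, fun r _ => mul_zero r⟩
  obtain ⟨p, hp, s, hs, rfl⟩ := Submodule.mem_sup.1 hp'
  refine ⟨p, hp, by simpa using neg_mem hs, fun r hr => ?_⟩
  linear_combination hr - hS r (mem_maximalIdeal_of_mul_eq_zero hr hp'0) s hs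

theorem isDirectSumOfCyclics_of_span_sup_span_sup_inf_eq {S I : Ideal R}
    (hS : ∀ r ∈ maximalIdeal R, ∀ s ∈ S, r * s = 0) {p q : R} (hI : R ∙ p ⊔ R ∙ q ⊔ I ⊓ S = I)
    (hpq : ∀ a b : R, a * p + b * q ∈ S → a * p = 0 ∧ b * q = 0) : I.IsDirectSumOfCyclics := by
  have hdisj : Disjoint (R ∙ p) (R ∙ q) := by
    refine Submodule.disjoint_def.2 fun g hg hg' => ?_
    obtain ⟨a, rfl⟩ := Submodule.mem_span_singleton.1 hg
    obtain ⟨b, hb⟩ := Submodule.mem_span_singleton.1 hg'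
    simp only [smul_eq_mul] at hb ⊢
    exact (hpq a (-b) (by rw [← hb]; ring_nf; exact zero_mem S)).1
  have hdisjS : Disjoint (R ∙ p ⊔ R ∙ q) (I ⊓ S) := by
    refine Submodule.disjoint_def.2 fun g hg hgS => ?_
    obtain ⟨_, ha, _, hb, rfl⟩ := Submodule.mem_sup.1 hg
    obtain ⟨a, rfl⟩ := Submodule.mem_span_singleton.1 ha
    obtain ⟨b, rfl⟩ := Submodule.mem_span_singleton.1 hb
    obtain ⟨h₁, h₂⟩ := hpq a b hgS.2
    simp [h₁, h₂]
  rw [← hI]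
  exact ((Ideal.isDirectSumOfCyclics_span_singleton p).sup
    (Ideal.isDirectSumOfCyclics_span_singleton q) hdisj).sup
    (Ideal.isDirectSumOfCyclics_of_maximalIdeal_mul_eq_zero fun r hr g hg => hS r hr g hg.2) hdisjS

/-- Lifts `p, q ∈ I` of `p', q'` give `I = R p ⊕ R q ⊕ (I ⊓ S)`. -/
theorem isDirectSumOfCyclics_of_inf_sup_eq {Q S I : Ideal R} (hQS : Disjoint Q S)
    (hS : ∀ r ∈ maximalIdeal R, ∀ s ∈ S, r * s = 0) (hI : I ≤ Q ⊔ S) {p' q' : R}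
    (hp' : p' ∈ Q ⊓ (I ⊔ S)) (hq' : q' ∈ Q ⊓ (I ⊔ S)) (hpq' : Disjoint (R ∙ p') (R ∙ q'))
    (hN : R ∙ p' ⊔ R ∙ q' = Q ⊓ (I ⊔ S)) : I.IsDirectSumOfCyclics := by
  obtain ⟨p, hpI, hpS, hp⟩ := exists_lift_of_mem_sup hS hp'.2
  obtain ⟨q, hqI, hqS, hq⟩ := exists_lift_of_mem_sup hS hq'.2
  have hmodS : ∀ a b : R, a * p + b * q - (a * p' + b * q') ∈ S := fun a b => by
    rw [show a * p + b * q - (a * p' + b * q') = a * (p - p') + b * (q - q') by ring]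
    exact add_mem (Ideal.mul_mem_left _ _ hpS) (Ideal.mul_mem_left _ _ hqS)
  refine isDirectSumOfCyclics_of_span_sup_span_sup_inf_eq hS (le_antisymm
    (sup_le (sup_le ((Submodule.span_singleton_le_iff_mem _ _).2 hpI)
      ((Submodule.span_singleton_le_iff_mem _ _).2 hqI)) inf_le_left) fun g hg => ?_)
    fun a b hab => ?_
  · obtain ⟨g', hg', s, hs, rfl⟩ := Submodule.mem_sup.1 (hI hg)
    obtain ⟨_, ha, _, hb, rfl⟩ := Submodule.mem_sup.1 (hN ▸
      ⟨hg', Submodule.mem_sup.2 ⟨_, hg, -s, neg_mem hs, by abel⟩⟩ : g' ∈ R ∙ p' ⊔ R ∙ q')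
    obtain ⟨a, rfl⟩ := Submodule.mem_span_singleton.1 ha
    obtain ⟨b, rfl⟩ := Submodule.mem_span_singleton.1 hb
    simp only [smul_eq_mul] at hg ⊢
    refine Submodule.mem_sup.2 ⟨a * p + b * q, add_mem
      (Submodule.mem_sup_left (Submodule.mem_span_singleton.2 ⟨a, rfl⟩))
      (Submodule.mem_sup_right (Submodule.mem_span_singleton.2 ⟨b, rfl⟩)), _,
      ⟨sub_mem hg (add_mem (Ideal.mul_mem_left _ _ hpI) (Ideal.mul_mem_left _ _ hqI)), ?_⟩,
      add_sub_cancel _ _⟩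
    rw [show a * p' + b * q' + s - (a * p + b * q) = s - (a * p + b * q - (a * p' + b * q'))
      by ring]
    exact sub_mem hs (hmodS a b)
  · have h0 : a * p' + b * q' = 0 := Submodule.disjoint_def.1 hQS _
      (add_mem (Ideal.mul_mem_left _ _ hp'.1) (Ideal.mul_mem_left _ _ hq'.1))
      (by simpa using sub_mem hab (hmodS a b))
    have hap : a * p' = 0 := Submodule.disjoint_def.1 hpq' _
      (Submodule.mem_span_singleton.2 ⟨a, rfl⟩)
      (Submodule.mem_span_singleton.2 ⟨-b, by rw [smul_eq_mul]; linear_combination -h0⟩)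
    exact ⟨hp a hap, hq b (by linear_combination h0 - hap)⟩

theorem isDirectSumOfCyclics_of_decomposition {Λ : Type} {x y : R} {w : Λ → R}
    (hind : iSupIndep (Sum.elim ![R ∙ x, R ∙ y] fun l => R ∙ w l))
    (hsup : R ∙ x ⊔ R ∙ y ⊔ (⨆ l, R ∙ w l) = maximalIdeal R)
    (hw : ∀ l, IsSimpleModule R (R ∙ w l))
    (hx : IsPrincipalIdealRing (R ⧸ Ideal.torsionOf R R x))
    (hy : IsPrincipalIdealRing (R ⧸ Ideal.torsionOf R R y)) (I : Ideal R) :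
    I.IsDirectSumOfCyclics := by
  obtain ⟨hxy, -, hXYS⟩ := iSupIndep_sumElim_iff.1 hind
  have hXY : ⨆ i, ![R ∙ x, R ∙ y] i = R ∙ x ⊔ R ∙ y :=
    le_antisymm (iSup_le fun i => by fin_cases i <;> simp)
      (sup_le (le_iSup ![R ∙ x, R ∙ y] 0) (le_iSup ![R ∙ x, R ∙ y] 1))
  rw [hXY] at hXYS
  have hMS : ∀ r ∈ maximalIdeal R, ∀ s ∈ ⨆ l, R ∙ w l, r * s = 0 := fun r hr s hs => by
    refine Submodule.iSup_induction _ (motive := fun s => r * s = 0) hs (fun l s hs => ?_)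
      (mul_zero r) fun s t hs ht => by rw [mul_add, hs, ht, add_zero]
    obtain ⟨c, rfl⟩ := Submodule.mem_span_singleton.1 hs
    have := hw l
    rw [smul_eq_mul, mul_left_comm, mul_eq_zero_of_isSimpleModule_span_singleton hr, mul_zero]
  have hspan : (fun k => R ∙ Sum.elim ![x, y] w k) = Sum.elim ![R ∙ x, R ∙ y] fun l => R ∙ w l := by
    ext (i | l) : 1
    · fin_cases i <;> rfl
    · rfl
  have hMy : ∀ r ∈ maximalIdeal R, r * y ∈ R ∙ (y * y) := fun r hr =>
    mul_mem_span_mul_self_of_iSupIndep (m := Sum.elim ![x, y] w) (by rw [hspan]; exact hind)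
      (.inl 1)
      (by rw [hspan, iSup_sum]; simpa only [Sum.elim_inl, Sum.elim_inr, hXY, hsup] using hr)
  by_cases hItop : I = ⊤
  · rw [hItop, ← Ideal.span_singleton_one]
    exact Ideal.isDirectSumOfCyclics_span_singleton 1
  have hIM : I ≤ R ∙ x ⊔ R ∙ y ⊔ ⨆ l, R ∙ w l := hsup.symm ▸ le_maximalIdeal hItop
  obtain ⟨p', hp', q', hq', hpq', hN⟩ := exists_disjoint_span_sup_span_eq
    (hxy.pairwiseDisjoint (by decide : (0 : Fin 2) ≠ 1))
    (fun K hK => isPrincipal_of_le_span_singleton hK)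
    (fun K hK => isPrincipal_of_le_span_singleton hK) dvd_total_mul_of_isBezout hMy
    (inf_le_left : (R ∙ x ⊔ R ∙ y) ⊓ (I ⊔ ⨆ l, R ∙ w l) ≤ _)
  exact isDirectSumOfCyclics_of_inf_sup_eq hXYS hMS hIM hp' hq' hpq' hN

end

/-- Main theorem: every ideal of a local ring `R` is a direct sum of cyclic modules iff
`M = Rx ⊕ Ry ⊕ (⊕_λ Rw_λ)` with each `Rw_λ` simple and `R/Ann(x)`, `R/Ann(y)` principal
ideal rings. -/
theorem ideals_directSumOfCyclics_iff (R : Type) [CommRing R] [IsLocalRing R] :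
    (∀ I : Ideal R, I.IsDirectSumOfCyclics) ↔
      ∃ (Λ : Type) (x y : R) (w : Λ → R),
        iSupIndep (Sum.elim
          ![Submodule.span R ({x} : Set R), Submodule.span R ({y} : Set R)]
          (fun l : Λ => Submodule.span R ({w l} : Set R))) ∧
        Submodule.span R ({x} : Set R) ⊔ Submodule.span R ({y} : Set R) ⊔
          (⨆ l, Submodule.span R ({w l} : Set R)) = IsLocalRing.maximalIdeal R ∧
        (∀ l, IsSimpleModule R (Submodule.span R ({w l} : Set R))) ∧
        IsPrincipalIdealRing (R ⧸ Ideal.torsionOf R R x) ∧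
        IsPrincipalIdealRing (R ⧸ Ideal.torsionOf R R y) := by
  refine ⟨exists_decomposition_of_forall_isDirectSumOfCyclics, ?_⟩
  rintro ⟨Λ, x, y, w, hind, hsup, hw, hx, hy⟩
  exact isDirectSumOfCyclics_of_decomposition hind hsup hw hx hy
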